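/- arXiv:2402.07457 — 2 statements merged into one kernel-verified Lean document; each statement's English description precedes it below -/
import Mathlib

section
/- The n-th order kernel function of the Dirichlet space of the unit disc based at ζ is given explicitly by M_n(ξ, ζ) = ((n−1)!/π) · (ξ − ζ)^n / ((1 − conj(ζ)·ξ)^n · (1 − |ζ|²)^n); i.e., the function ξ ↦ M_n(ξ, ζ) is holomorphic on D, vanishes to order n at ζ, and its derivative in ξ equals K_n(ξ, ζ) = (n!/π) · φ_ζ(ξ)^{n-1} φ_ζ'(ξ) / conj(φ_ζ'(0))^n. -/
open Complex Metric

/-- The Möbius map `φ_ζ(z) = (ζ - z)/(1 - z·conj ζ)`. -/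
noncomputable def moebius (ζ z : ℂ) : ℂ := (ζ - z) / (1 - z * starRingEnd ℂ ζ)

/-- The `n`-th order kernel function of the Dirichlet space of the unit disc:
`M_n(ξ, ζ) = ((n-1)!/π) (ξ - ζ)^n / ((1 - conj ζ ξ)^n (1 - |ζ|²)^n)`. -/
noncomputable def Mker (n : ℕ) (ξ ζ : ℂ) : ℂ :=
  (((n - 1).factorial : ℂ) / (Real.pi : ℂ)) * (ξ - ζ) ^ n /
    ((1 - starRingEnd ℂ ζ * ξ) ^ n * (1 - (‖ζ‖ : ℂ) ^ 2) ^ n)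

/-! Since `φ_ζ(ξ) = -(ξ - ζ)/(1 - conj ζ ξ)` and `conj φ_ζ'(0) = |ζ|² - 1`, the kernel is
`M_n(·, ζ) = ((n-1)!/π) φ_ζ^n / conj(φ_ζ'(0))^n`. Its derivative is then given by the chain
rule, and it vanishes to order `n` at `ζ` because `φ_ζ` vanishes there. -/

theorem iteratedDeriv_const_mul_pow_eq_zero_of_lt {𝕜 : Type*} [NontriviallyNormedField 𝕜]
    [CharZero 𝕜] [CompleteSpace 𝕜] {f : 𝕜 → 𝕜} {z₀ : 𝕜} (hf : AnalyticAt 𝕜 f z₀)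
    (hf₀ : f z₀ = 0) (c : 𝕜) {k n : ℕ} (hk : k < n) :
    iteratedDeriv k (fun z => c * f z ^ n) z₀ = 0 := by
  have hc : AnalyticAt 𝕜 (fun _ => c) z₀ := analyticAt_const
  have hord : 1 ≤ analyticOrderAt f z₀ :=
    Order.one_le_iff_ne_zero.2 (hf.analyticOrderAt_ne_zero.2 hf₀)
  refine (natCast_le_analyticOrderAt_iff_iteratedDeriv_eq_zero (hc.mul (hf.pow n))).1 ?_ k hk
  calc (n : ℕ∞) = n • 1 := by simp
    _ ≤ n • analyticOrderAt f z₀ := nsmul_le_nsmul_right hord n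
    _ = analyticOrderAt (f ^ n) z₀ := (analyticOrderAt_pow hf n).symm
    _ ≤ analyticOrderAt (fun _ => c) z₀ + analyticOrderAt (f ^ n) z₀ := le_add_self
    _ = analyticOrderAt (fun z => c * f z ^ n) z₀ := (analyticOrderAt_mul hc (hf.pow n)).symm

theorem one_sub_mul_conj_ne_zero {z ζ : ℂ} (hz : ‖z‖ < 1) (hζ : ‖ζ‖ < 1) :
    1 - z * starRingEnd ℂ ζ ≠ 0 := by
  intro h
  have : ‖z * starRingEnd ℂ ζ‖ < 1 := by
    rw [norm_mul, norm_conj]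
    exact mul_lt_one_of_nonneg_of_lt_one_left (norm_nonneg z) hz hζ.le
  simp [← sub_eq_zero.1 h] at this

@[simp]
theorem moebius_self (ζ : ℂ) : moebius ζ ζ = 0 := by
  simp [moebius]

theorem analyticAt_moebius {ζ z : ℂ} (hz : 1 - z * starRingEnd ℂ ζ ≠ 0) :
    AnalyticAt ℂ (moebius ζ) z := by
  unfold moebius
  fun_prop (disch := exact hz)

theorem hasDerivAt_moebius {ζ z : ℂ} (hz : 1 - z * starRingEnd ℂ ζ ≠ 0) :
    HasDerivAt (moebius ζ) ((ζ * starRingEnd ℂ ζ - 1) / (1 - z * starRingEnd ℂ ζ) ^ 2) z := by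
  have hnum : HasDerivAt (fun z => ζ - z) (-1) z := (hasDerivAt_id z).const_sub ζ
  have hden : HasDerivAt (fun z => 1 - z * starRingEnd ℂ ζ) (-starRingEnd ℂ ζ) z := by
    simpa using ((hasDerivAt_id z).mul_const (starRingEnd ℂ ζ)).const_sub 1
  exact (hnum.div hden hz).congr_deriv (by ring)

theorem conj_deriv_moebius_zero (ζ : ℂ) :
    starRingEnd ℂ (deriv (moebius ζ) 0) = (‖ζ‖ : ℂ) ^ 2 - 1 := by
  rw [(hasDerivAt_moebius (by simp)).deriv, mul_conj']
  simp

theorem Mker_eq_const_mul_moebius_pow (n : ℕ) (ξ ζ : ℂ) :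
    Mker n ξ ζ = ((n - 1).factorial / Real.pi : ℂ) / starRingEnd ℂ (deriv (moebius ζ) 0) ^ n *
      moebius ζ ξ ^ n := by
  set C : ℂ := (n - 1).factorial / Real.pi
  calc Mker n ξ ζ
      = C * ((ξ - ζ) / ((1 - starRingEnd ℂ ζ * ξ) * (1 - (‖ζ‖ : ℂ) ^ 2))) ^ n := by
        rw [Mker, div_pow, mul_pow, mul_div_assoc]
    _ = C * ((ζ - ξ) / (1 - ξ * starRingEnd ℂ ζ) / ((‖ζ‖ : ℂ) ^ 2 - 1)) ^ n := by
        rw [div_div, ← neg_div_neg_eq]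
        congr 2
        ring
    _ = _ := by
        rw [conj_deriv_moebius_zero, moebius, div_pow _ (_ - 1)]
        ring

/-- The explicit formula `M_n(ξ,ζ)` gives the `n`-th order kernel function of the Dirichlet
space of the unit disc: it is holomorphic in `ξ` on `D`, vanishes to order `n` at `ζ`, and
its `ξ`-derivative equals `K_n(ξ,ζ) = (n!/π) φ_ζ(ξ)^{n-1} φ_ζ'(ξ)/conj(φ_ζ'(0))^n`. -/
theorem Mker_is_nth_order_kernel (n : ℕ) (hn : 0 < n) (ζ : ℂ) (hζ : ζ ∈ ball (0 : ℂ) 1) :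
    DifferentiableOn ℂ (fun ξ => Mker n ξ ζ) (ball (0 : ℂ) 1) ∧
    (∀ k < n, iteratedDeriv k (fun ξ => Mker n ξ ζ) ζ = 0) ∧
    ∀ ξ ∈ ball (0 : ℂ) 1,
      deriv (fun ξ => Mker n ξ ζ) ξ =
        ((n.factorial : ℂ) / (Real.pi : ℂ)) * (moebius ζ ξ) ^ (n - 1) *
          deriv (moebius ζ) ξ / (starRingEnd ℂ (deriv (moebius ζ) 0)) ^ n := by
  set K : ℂ := ((n - 1).factorial / Real.pi : ℂ) / starRingEnd ℂ (deriv (moebius ζ) 0) ^ n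
  have hM : (fun ξ => Mker n ξ ζ) = fun ξ => K * moebius ζ ξ ^ n :=
    funext fun ξ => Mker_eq_const_mul_moebius_pow n ξ ζ
  have hφ : ∀ ξ ∈ ball (0 : ℂ) 1, AnalyticAt ℂ (moebius ζ) ξ := fun ξ hξ => analyticAt_moebius
    (one_sub_mul_conj_ne_zero (mem_ball_zero_iff.1 hξ) (mem_ball_zero_iff.1 hζ))
  have hderiv : ∀ ξ ∈ ball (0 : ℂ) 1, HasDerivAt (fun ξ => Mker n ξ ζ)
      (K * (n * moebius ζ ξ ^ (n - 1) * deriv (moebius ζ) ξ)) ξ := fun ξ hξ => by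
    rw [hM]
    exact ((hφ ξ hξ).differentiableAt.hasDerivAt.pow n).const_mul K
  refine ⟨fun ξ hξ => (hderiv ξ hξ).differentiableAt.differentiableWithinAt, ?_, ?_⟩
  · intro k hk
    rw [hM]
    exact iteratedDeriv_const_mul_pow_eq_zero_of_lt (hφ ζ hζ) (moebius_self ζ) K hk
  · intro ξ hξ
    rw [(hderiv ξ hξ).deriv, ← Nat.mul_factorial_pred hn.ne']
    push_cast
    ring
end

section
/- If μ is a positive measurable weight on a domain Ω ⊆ ℂ such that μ^{−a} is locally integrable for some a > 0, then μ is an admissible weight: for every compact K ⊂ Ω there is C_K > 0 with sup_{z∈K} |f(z)| ≤ C_K · (∫_Ω |f|² μ dA)^{1/2} for every holomorphic f ∈ L²(Ω, μ dA). -/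
open Complex MeasureTheory Metric Real Set

/-!
Pick `δ > 0` with `cthickening δ K ⊆ Ω`. For holomorphic `f`, `‖f‖²` satisfies the sub-mean-value
inequality on discs. On a disc of radius `r` where `‖f‖² ≤ M`, pointwise
`‖f‖² ≤ ε⁻¹ ‖f‖² μ + M ε ^ a μ ^ (-a)` (split according to `μ ≥ ε` or `μ < ε`), so the choice
`ε ≈ r ^ (2 / a)` gives `‖f z‖² ≤ A r ^ (-b) + θ M` with `b = 2 + 2 / a`, `A` proportional to
`∫ ‖f‖² μ` and `θ` as small as we like. The term `θ M` is absorbed at a maximum point `z₀` of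
`(δ - infDist · K) ^ b ‖f‖²` on the thickening, using the disc of radius `(δ - infDist z₀ K) / 2`.
-/

theorem setIntegral_ball_eq_setIntegral_circleMap {E : Type*} [NormedAddCommGroup E]
    [NormedSpace ℝ E] (g : ℂ → E) (c : ℂ) (R : ℝ) :
    ∫ w in ball c R, g w =
      ∫ p in Ioo 0 R ×ˢ Ioo (-π) π, p.1 • g (circleMap c p.1 p.2) := by
  have htrans : ∫ w in ball c R, g w = ∫ w in ball 0 R, g (c + w) := by
    rw [← (measurePreserving_add_left volume c).setIntegral_preimage_emb
      (measurableEmbedding_addLeft c)]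
    simp
  have hpolar : Continuous Complex.polarCoord.symm :=
    Complex.equivRealProdCLM.symm.continuous.comp continuous_polarCoord_symm
  have hindicator (p : ℝ × ℝ) :
      p.1 • (ball 0 R).indicator (fun w => g (c + w)) (Complex.polarCoord.symm p)
        = (Complex.polarCoord.symm ⁻¹' ball 0 R).indicator
            (fun p => p.1 • g (circleMap c p.1 p.2)) p := by
    have hcircle : c + Complex.polarCoord.symm p = circleMap c p.1 p.2 := by
      simp [circleMap, Complex.exp_mul_I]
    by_cases h : Complex.polarCoord.symm p ∈ ball 0 R
    · rw [indicator_of_mem h, indicator_of_mem (mem_preimage.mpr h), hcircle]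
    · rw [indicator_of_notMem h, indicator_of_notMem (by exact h), smul_zero]
  have htarget : polarCoord.target ∩ (Complex.polarCoord.symm ⁻¹' ball 0 R)
      = Ioo 0 R ×ˢ Ioo (-π) π := by
    ext ⟨ρ, θ⟩
    simp only [polarCoord_target, mem_inter_iff, mem_prod, mem_preimage, mem_ball_zero_iff,
      norm_polarCoord_symm, mem_Ioi, mem_Ioo]
    constructor
    · rintro ⟨⟨hρ, hθ⟩, hR⟩
      exact ⟨⟨hρ, by rwa [abs_of_pos hρ] at hR⟩, hθ⟩
    · rintro ⟨⟨hρ, hR⟩, hθ⟩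
      exact ⟨⟨hρ, hθ⟩, by rwa [abs_of_pos hρ]⟩
  rw [htrans, ← integral_indicator measurableSet_ball, ← Complex.integral_comp_polarCoord_symm]
  simp_rw [hindicator]
  rw [setIntegral_indicator (measurableSet_ball.preimage hpolar.measurable), htarget]

theorem integral_Ioo_neg_pi_pi_eq_circleAverage {E : Type*} [NormedAddCommGroup E]
    [NormedSpace ℝ E] [CompleteSpace E] (g : ℂ → E) (c : ℂ) (R : ℝ) :
    ∫ θ in Ioo (-π) π, g (circleMap c R θ) = (2 * π) • circleAverage g c R := by
  rw [circleAverage_eq_integral_add (-π), smul_inv_smul₀ two_pi_pos.ne',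
    intervalIntegral.integral_comp_add_right (fun θ => g (circleMap c R θ)),
    intervalIntegral.integral_of_le (by linarith [pi_pos]), integral_Ioc_eq_integral_Ioo]
  ring_nf

theorem ContinuousOn.integral_ball_eq_intervalIntegral_circleAverage {E : Type*}
    [NormedAddCommGroup E] [NormedSpace ℝ E] [CompleteSpace E] {g : ℂ → E} {c : ℂ} {R : ℝ}
    (hR : 0 ≤ R) (hg : ContinuousOn g (closedBall c R)) :
    ∫ w in ball c R, g w = ∫ ρ in 0..R, (2 * π * ρ) • circleAverage g c ρ := by
  have hmaps : MapsTo (fun p : ℝ × ℝ => circleMap c p.1 p.2)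
      (Icc 0 R ×ˢ Icc (-π) π) (closedBall c R) := by
    rintro ⟨ρ, θ⟩ ⟨hρ, -⟩
    simpa [dist_eq_norm, abs_of_nonneg hρ.1] using hρ.2
  have hint : IntegrableOn (fun p : ℝ × ℝ => p.1 • g (circleMap c p.1 p.2))
      (Ioo 0 R ×ˢ Ioo (-π) π) (volume.prod volume) := by
    refine ContinuousOn.integrableOn_compact (isCompact_Icc.prod isCompact_Icc) ?_
      |>.mono_set (prod_mono Ioo_subset_Icc_self Ioo_subset_Icc_self)
    exact continuousOn_fst.smul (hg.comp (by fun_prop) hmaps)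
  rw [setIntegral_ball_eq_setIntegral_circleMap, Measure.volume_eq_prod, setIntegral_prod _ hint,
    intervalIntegral.integral_of_le hR, integral_Ioc_eq_integral_Ioo]
  refine setIntegral_congr_fun measurableSet_Ioo fun ρ _ => ?_
  rw [integral_smul, integral_Ioo_neg_pi_pi_eq_circleAverage, smul_smul, mul_comm ρ]

theorem DiffContOnCl.norm_le_circleAverage_norm {E : Type*} [NormedAddCommGroup E]
    [NormedSpace ℂ E] [CompleteSpace E] {f : ℂ → E} {c : ℂ} {R : ℝ}
    (hf : DiffContOnCl ℂ f (ball c |R|)) :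
    ‖f c‖ ≤ Real.circleAverage (fun z => ‖f z‖) c R := by
  rw [← hf.circleAverage, circleAverage_def, circleAverage_def, norm_smul, smul_eq_mul,
    norm_inv, Real.norm_of_nonneg two_pi_pos.le]
  gcongr
  exact intervalIntegral.norm_integral_le_integral_norm two_pi_pos.le

theorem DifferentiableOn.pi_mul_sq_mul_norm_le_integral_ball {E : Type*} [NormedAddCommGroup E]
    [NormedSpace ℂ E] [CompleteSpace E] {f : ℂ → E} {c : ℂ} {R : ℝ} (hR : 0 ≤ R)
    (hf : DifferentiableOn ℂ f (closedBall c R)) :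
    π * R ^ 2 * ‖f c‖ ≤ ∫ w in ball c R, ‖f w‖ := by
  have hnorm : ContinuousOn (fun z => ‖f z‖) (closedBall c R) := hf.continuousOn.norm
  have hmean : ∀ ρ ∈ Icc 0 R,
      2 * π * ρ * ‖f c‖ ≤ (2 * π * ρ) • circleAverage (fun z => ‖f z‖) c ρ := fun ρ hρ => by
    have hball : closedBall c |ρ| ⊆ closedBall c R := by
      rw [abs_of_nonneg hρ.1]
      exact closedBall_subset_closedBall hρ.2
    rw [smul_eq_mul]
    gcongr
    · exact mul_nonneg two_pi_pos.le hρ.1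
    · exact (hf.diffContOnCl_ball hball).norm_le_circleAverage_norm
  have haverage : ContinuousOn (circleAverage (fun z => ‖f z‖) c) (Icc 0 R) :=
    (hnorm.mono fun z hz => by simpa [dist_eq_norm] using hz.2).circleAverage fun ρ hρ => hρ.1
  calc π * R ^ 2 * ‖f c‖ = ∫ ρ in 0..R, 2 * π * ρ * ‖f c‖ := by
        rw [intervalIntegral.integral_mul_const, intervalIntegral.integral_const_mul, integral_id]
        ring
    _ ≤ ∫ ρ in 0..R, (2 * π * ρ) • circleAverage (fun z => ‖f z‖) c ρ := by
        refine intervalIntegral.integral_mono_on hR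
          ((by fun_prop : Continuous fun ρ : ℝ => 2 * π * ρ * ‖f c‖).intervalIntegrable 0 R)
          (ContinuousOn.intervalIntegrable ?_) hmean
        rw [uIcc_of_le hR]
        exact (continuousOn_const.mul continuousOn_id).smul haverage
    _ = ∫ w in ball c R, ‖f w‖ :=
        (hnorm.integral_ball_eq_intervalIntegral_circleAverage hR).symm

theorem le_inv_mul_mul_add_mul_rpow_neg {h M w ε a : ℝ} (hh : 0 ≤ h) (hM : h ≤ M)
    (hw : 0 < w) (hε : 0 < ε) (ha : 0 ≤ a) : h ≤ ε⁻¹ * (h * w) + M * ε ^ a * w ^ (-a) := by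
  have hsmall : 0 ≤ M * ε ^ a * w ^ (-a) := by have := hh.trans hM; positivity
  rcases le_or_gt ε w with hεw | hwε
  · have : h ≤ ε⁻¹ * (h * w) := by
      rw [inv_mul_eq_div, le_div_iff₀ hε]
      exact mul_le_mul_of_nonneg_left hεw hh
    linarith
  · have hratio : 1 ≤ ε ^ a * w ^ (-a) := by
      rw [rpow_neg hw.le, ← div_eq_mul_inv, ← div_rpow hε.le hw.le]
      exact one_le_rpow ((one_le_div hw).2 hwε.le) ha
    have : h ≤ M * ε ^ a * w ^ (-a) := by
      rw [mul_assoc]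
      nlinarith [hh.trans hM]
    have : 0 ≤ ε⁻¹ * (h * w) := by positivity
    linarith

theorem setIntegral_le_weighted_add_rpow_neg {α : Type*} [MeasurableSpace α] {ν : Measure α}
    {s : Set α} {h w : α → ℝ} {M ε a : ℝ} (hs : MeasurableSet s) (hε : 0 < ε)
    (ha : 0 ≤ a) (hh : ∀ x ∈ s, 0 ≤ h x) (hM : ∀ x ∈ s, h x ≤ M) (hw : ∀ x ∈ s, 0 < w x)
    (hint : IntegrableOn h s ν) (hhw : IntegrableOn (fun x => h x * w x) s ν)
    (hwa : IntegrableOn (fun x => w x ^ (-a)) s ν) :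
    ∫ x in s, h x ∂ν ≤
      ε⁻¹ * (∫ x in s, h x * w x ∂ν) + M * ε ^ a * ∫ x in s, w x ^ (-a) ∂ν := by
  rw [← integral_const_mul, ← integral_const_mul,
    ← integral_add (hhw.const_mul _) (hwa.const_mul _)]
  exact setIntegral_mono_on hint ((hhw.const_mul _).add (hwa.const_mul _)) hs fun x hx =>
    le_inv_mul_mul_add_mul_rpow_neg (hh x hx) (hM x hx) (hw x hx) hε ha

theorem le_div_rpow_add_mul_of_forall_le {k r a I θ P L M : ℝ} (hk : 0 < k) (hr : 0 < r)
    (ha : 0 < a) (hI : 0 < I) (hθ : 0 < θ)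
    (h : ∀ ε > 0, k * r ^ 2 * P ≤ ε⁻¹ * L + M * ε ^ a * I) :
    P ≤ L / (k * (θ * k / I) ^ a⁻¹) / r ^ (2 + 2 / a) + θ * M := by
  set c := (θ * k / I) ^ a⁻¹
  have hc : 0 < c := rpow_pos_of_pos (by positivity) _
  have hεa : (c * r ^ (2 / a)) ^ a = θ * k / I * r ^ 2 := by
    rw [mul_rpow hc.le (by positivity), rpow_inv_rpow (by positivity) ha.ne', ← rpow_mul hr.le,
      div_mul_cancel₀ _ ha.ne', rpow_two]
  have hsplit : r ^ (2 + 2 / a) = r ^ 2 * r ^ (2 / a) := by rw [rpow_add hr, rpow_two]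
  have key := h (c * r ^ (2 / a)) (by positivity)
  rw [hεa] at key
  rw [hsplit, ← sub_le_iff_le_add, le_div_iff₀ (by positivity)]
  field_simp at key ⊢
  nlinarith [key]

theorem Metric.mem_cthickening_iff_infDist_le {X : Type*} [PseudoMetricSpace X] {s : Set X}
    {δ : ℝ} {x : X} (hs : s.Nonempty) (hδ : 0 ≤ δ) : x ∈ cthickening δ s ↔ infDist x s ≤ δ := by
  rw [mem_cthickening_iff, ENNReal.le_ofReal_iff_toReal_le (infEDist_ne_top hs) hδ]
  rfl

theorem IsCompact.le_of_forall_closedBall_le {X : Type*} [PseudoMetricSpace X] [ProperSpace X]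
    {K : Set X} (hK : IsCompact K) {δ b A : ℝ} {u : X → ℝ} (hδ : 0 < δ) (hb : 0 < b)
    (hA : 0 ≤ A) (hu : ContinuousOn u (cthickening δ K)) (hu0 : ∀ x ∈ cthickening δ K, 0 ≤ u x)
    (hloc : ∀ z r M, 0 < r → closedBall z r ⊆ cthickening δ K →
      (∀ w ∈ closedBall z r, u w ≤ M) → u z ≤ A / r ^ b + (2 ^ (b + 1))⁻¹ * M) :
    ∀ z ∈ K, u z ≤ 2 ^ (b + 1) * A / δ ^ b := by
  intro z hz
  have hmem {x : X} : x ∈ cthickening δ K ↔ infDist x K ≤ δ :=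
    mem_cthickening_iff_infDist_le ⟨z, hz⟩ hδ.le
  set g : X → ℝ := fun x => (δ - infDist x K) ^ b * u x with hg
  have hgc : ContinuousOn g (cthickening δ K) :=
    ((continuous_const.sub (continuous_infDist_pt K)).continuousOn.rpow_const
      fun _ _ => Or.inr hb.le).mul hu
  obtain ⟨z₀, hz₀, hmax⟩ :=
    hK.cthickening.exists_isMaxOn ⟨z, self_subset_cthickening K hz⟩ hgc
  have hmax' : g z₀ ≤ 2 ^ (b + 1) * A := by
    rcases (sub_nonneg.2 (hmem.1 hz₀)).eq_or_lt with h0 | hpos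
    · simp only [hg, ← h0, zero_rpow hb.ne', zero_mul]
      positivity
    set r := (δ - infDist z₀ K) / 2 with hr_def
    have hr : 0 < r := by positivity
    have hdist {w} (hw : w ∈ closedBall z₀ r) : r ≤ δ - infDist w K := by
      have := infDist_le_infDist_add_dist (x := w) (y := z₀) (s := K)
      have := mem_closedBall.1 hw
      linarith [hr_def]
    have hball : closedBall z₀ r ⊆ cthickening δ K := fun w hw =>
      hmem.2 (by linarith [hdist hw])
    have hbound : ∀ w ∈ closedBall z₀ r, u w ≤ g z₀ / r ^ b := fun w hw => by
      rw [le_div_iff₀ (by positivity)]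
      calc u w * r ^ b ≤ u w * (δ - infDist w K) ^ b := by
            gcongr
            · exact hu0 w (hball hw)
            · exact hdist hw
        _ = g w := mul_comm _ _
        _ ≤ g z₀ := hmax (hball hw)
    have hlocal := hloc z₀ r _ hr hball hbound
    have hgz₀ : g z₀ = 2 ^ b * r ^ b * u z₀ := by
      rw [← mul_rpow zero_le_two hr.le, show 2 * r = δ - infDist z₀ K by linarith [hr_def]]
    have h2 : (2 : ℝ) ^ (b + 1) = 2 * 2 ^ b := by rw [rpow_add_one two_ne_zero]; ring
    have : g z₀ ≤ 2 ^ b * A + g z₀ / 2 := by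
      calc g z₀ = 2 ^ b * r ^ b * u z₀ := hgz₀
        _ ≤ 2 ^ b * r ^ b * (A / r ^ b + (2 ^ (b + 1))⁻¹ * (g z₀ / r ^ b)) := by gcongr
        _ = 2 ^ b * A + g z₀ / 2 := by rw [h2]; field_simp
    rw [h2]
    linarith
  have hz' : g z = δ ^ b * u z := by simp only [hg, infDist_zero_of_mem hz, sub_zero]
  rw [le_div_iff₀ (by positivity), mul_comm]
  exact hz' ▸ (hmax (self_subset_cthickening K hz)).trans hmax'

theorem DifferentiableOn.pi_mul_sq_mul_sq_norm_le_weighted {Ω Q : Set ℂ} {f : ℂ → ℂ}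
    {μ : ℂ → ℝ} {a ε r M I : ℝ} {z : ℂ} (hf : DifferentiableOn ℂ f Ω)
    (hΩ : MeasurableSet Ω) (hQΩ : Q ⊆ Ω) (hQ : MeasurableSet Q) (hpos : ∀ w ∈ Ω, 0 < μ w)
    (hfμ : IntegrableOn (fun w => ‖f w‖ ^ 2 * μ w) Ω)
    (hμQ : IntegrableOn (fun w => μ w ^ (-a)) Q) (hI : ∫ w in Q, μ w ^ (-a) ≤ I) (ha : 0 ≤ a)
    (hε : 0 < ε) (hr : 0 < r) (hball : closedBall z r ⊆ Q)
    (hM : ∀ w ∈ closedBall z r, ‖f w‖ ^ 2 ≤ M) :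
    π * r ^ 2 * ‖f z‖ ^ 2 ≤
      ε⁻¹ * (∫ w in Ω, ‖f w‖ ^ 2 * μ w) + M * ε ^ a * I := by
  have hfr : DifferentiableOn ℂ f (closedBall z r) := hf.mono (hball.trans hQΩ)
  have hballQ : ball z r ⊆ Q := ball_subset_closedBall.trans hball
  have hM0 : 0 ≤ M := (sq_nonneg _).trans (hM z (mem_closedBall_self hr.le))
  have hweighted : ∫ w in ball z r, ‖f w‖ ^ 2 * μ w ≤ ∫ w in Ω, ‖f w‖ ^ 2 * μ w :=
    setIntegral_mono_set hfμ
      (ae_restrict_of_forall_mem hΩ fun w hw => by have := hpos w hw; positivity)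
      (hballQ.trans hQΩ).eventuallyLE
  have hsingular : ∫ w in ball z r, μ w ^ (-a) ≤ I :=
    (setIntegral_mono_set hμQ
      (ae_restrict_of_forall_mem hQ fun w hw => (rpow_pos_of_pos (hpos w (hQΩ hw)) _).le)
      hballQ.eventuallyLE).trans hI
  calc π * r ^ 2 * ‖f z‖ ^ 2 = π * r ^ 2 * ‖f z ^ 2‖ := by rw [norm_pow]
    _ ≤ ∫ w in ball z r, ‖f w ^ 2‖ := (hfr.pow 2).pi_mul_sq_mul_norm_le_integral_ball hr.le
    _ = ∫ w in ball z r, ‖f w‖ ^ 2 := by simp_rw [norm_pow]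
    _ ≤ ε⁻¹ * (∫ w in ball z r, ‖f w‖ ^ 2 * μ w) +
          M * ε ^ a * ∫ w in ball z r, μ w ^ (-a) :=
      setIntegral_le_weighted_add_rpow_neg measurableSet_ball hε ha (fun _ _ => sq_nonneg _)
        (fun w hw => hM w (ball_subset_closedBall hw)) (fun w hw => hpos w (hQΩ (hballQ hw)))
        ((hfr.continuousOn.norm.pow 2).integrableOn_compact (isCompact_closedBall z r)
          |>.mono_set ball_subset_closedBall)
        (hfμ.mono_set (hballQ.trans hQΩ)) (hμQ.mono_set hballQ)
    _ ≤ ε⁻¹ * (∫ w in Ω, ‖f w‖ ^ 2 * μ w) + M * ε ^ a * I := by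
      gcongr

theorem admissible_of_locally_integrable_rpow_general (Ω : Set ℂ) (hΩ : IsOpen Ω) (μ : ℂ → ℝ)
    (hpos : ∀ z ∈ Ω, 0 < μ z) (a : ℝ) (ha : 0 < a)
    (hloc : LocallyIntegrableOn (fun z => (μ z) ^ (-a)) Ω volume) :
    ∀ K : Set ℂ, IsCompact K → K ⊆ Ω →
      ∃ C > 0, ∀ f : ℂ → ℂ, DifferentiableOn ℂ f Ω →
        IntegrableOn (fun z => ‖f z‖ ^ 2 * μ z) Ω volume →
        ∀ z ∈ K, ‖f z‖ ≤ C * Real.sqrt (∫ w in Ω, ‖f w‖ ^ 2 * μ w) := by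
  intro K hK hKΩ
  obtain ⟨δ, hδ, hQΩ⟩ := hK.exists_cthickening_subset_open hΩ hKΩ
  have hQ : MeasurableSet (cthickening δ K) := isClosed_cthickening.measurableSet
  have hμQ : IntegrableOn (fun w => μ w ^ (-a)) (cthickening δ K) :=
    hloc.integrableOn_compact_subset hQΩ hK.cthickening
  set b := 2 + 2 / a
  set I := (∫ w in cthickening δ K, μ w ^ (-a)) + 1
  have hI : 0 < I := by
    have := setIntegral_nonneg (μ := volume) hQ fun w hw =>
      (rpow_pos_of_pos (hpos w (hQΩ hw)) (-a)).le
    linarith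
  set c := ((2 ^ (b + 1))⁻¹ * π / I) ^ a⁻¹
  have hc : 0 < c := rpow_pos_of_pos (div_pos (by positivity) hI) _
  refine ⟨√(2 ^ (b + 1) / (π * c) / δ ^ b), by positivity, fun f hf hfμ z hz => ?_⟩
  set L := ∫ w in Ω, ‖f w‖ ^ 2 * μ w
  have hL : 0 ≤ L := setIntegral_nonneg hΩ.measurableSet fun w hw => by
    have := hpos w hw; positivity
  have hbound : ‖f z‖ ^ 2 ≤ 2 ^ (b + 1) * (L / (π * c)) / δ ^ b :=
    hK.le_of_forall_closedBall_le (u := fun w => ‖f w‖ ^ 2) hδ (by positivity) (by positivity)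
      ((hf.continuousOn.mono hQΩ).norm.pow 2) (fun _ _ => sq_nonneg _)
      (fun w r M hr hball hM => le_div_rpow_add_mul_of_forall_le pi_pos hr ha hI (by positivity)
        fun ε hε => hf.pi_mul_sq_mul_sq_norm_le_weighted hΩ.measurableSet hQΩ hQ hpos hfμ hμQ
          (by linarith) ha.le hε hr hball hM) z hz
  rw [← sqrt_mul (by positivity), le_sqrt (norm_nonneg _) (by positivity)]
  convert hbound using 1
  ring

/-- If `μ` is a positive measurable weight on a domain `Ω ⊆ ℂ` with `μ^{-a}` locally
integrable for some `a > 0`, then `μ` is admissible: for every compact `K ⊆ Ω` there is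
`C > 0` with `sup_K |f| ≤ C ‖f‖_{L²_μ}` for every holomorphic `f ∈ L²_μ(Ω)`. -/
theorem admissible_of_locally_integrable_rpow (Ω : Set ℂ) (hΩ : IsOpen Ω)
    (hconn : IsConnected Ω) (μ : ℂ → ℝ) (hmeas : Measurable μ)
    (hpos : ∀ z ∈ Ω, 0 < μ z) (a : ℝ) (ha : 0 < a)
    (hloc : LocallyIntegrableOn (fun z => (μ z) ^ (-a)) Ω volume) :
    ∀ K : Set ℂ, IsCompact K → K ⊆ Ω →
      ∃ C > 0, ∀ f : ℂ → ℂ, DifferentiableOn ℂ f Ω →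
        IntegrableOn (fun z => ‖f z‖ ^ 2 * μ z) Ω volume →
        ∀ z ∈ K, ‖f z‖ ≤ C * Real.sqrt (∫ w in Ω, ‖f w‖ ^ 2 * μ w) :=
  admissible_of_locally_integrable_rpow_general Ω hΩ μ hpos a ha hloc
end
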